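/- For every k not divisible by 5, the sequence (F_{k+5j} mod 10)_{j≥0} is periodic with period 12, and its period is a cyclic shift of the period of the Lucas sequence modulo 10, namely (2, 1, 3, 4, 7, 1, 8, 9, 7, 6, 3, 9). -/
import Mathlib

/-- The Lucas sequence: L₀ = 2, L₁ = 1, Lₙ₊₂ = Lₙ₊₁ + Lₙ. -/
def lucas : ℕ → ℕ
  | 0 => 2
  | 1 => 1
  | n + 2 => lucas (n + 1) + lucas n

lemma fib60 (n : ℕ) : Nat.fib (n + 60) % 10 = Nat.fib n % 10 := by
  induction n using Nat.twoStepInduction with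
  | zero => decide
  | one => decide
  | more n ih1 ih2 =>
    have : n + 2 + 60 = (n + 60) + 2 := by ring
    rw [this, Nat.fib_add_two (n := n + 60), Nat.fib_add_two (n := n), Nat.add_mod, ih1, ih2, ← Nat.add_mod]

lemma fib60m (n m : ℕ) : Nat.fib (n + 60 * m) % 10 = Nat.fib n % 10 := by
  induction m with
  | zero => rfl
  | succ m ih =>
    have : n + 60 * (m + 1) = (n + 60 * m) + 60 := by ring
    rw [this, fib60, ih]

lemma luc12 (n : ℕ) : lucas (n + 12) % 10 = lucas n % 10 := by
  induction n using Nat.twoStepInduction with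
  | zero => decide
  | one => decide
  | more n ih1 ih2 =>
    have : n + 2 + 12 = (n + 12) + 2 := by ring
    rw [this, show lucas ((n+12)+2) = lucas ((n+12)+1) + lucas (n+12) from rfl,
      show lucas (n+2) = lucas (n+1) + lucas n from rfl,
      Nat.add_mod, ih1, ih2, ← Nat.add_mod]

lemma luc12m (n m : ℕ) : lucas (n + 12 * m) % 10 = lucas n % 10 := by
  induction m with
  | zero => rfl
  | succ m ih =>
    have : n + 12 * (m + 1) = (n + 12 * m) + 12 := by ring
    rw [this, luc12, ih]

lemma key : ∀ r < 60, ¬ (5 ∣ r) → ∃ s < 12, ∀ t < 12,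
    Nat.fib (r + 5 * t) % 10 = lucas (t + s) % 10 := by decide

theorem jump_five_is_lucas (k : ℕ) (hk : ¬ (5 ∣ k)) :
    (∀ j : ℕ, Nat.fib (k + 5 * (j + 12)) % 10 = Nat.fib (k + 5 * j) % 10) ∧
    (∃ s : ℕ, ∀ j : ℕ, Nat.fib (k + 5 * j) ≡ lucas (j + s) [MOD 10]) := by
  constructor
  · intro j
    have : k + 5 * (j + 12) = (k + 5 * j) + 60 := by ring
    rw [this, fib60]
  · have hr : ¬ (5 ∣ k % 60) := by
      rw [Nat.dvd_mod_iff (by norm_num)]; exact hk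
    obtain ⟨s, -, H⟩ := key (k % 60) (Nat.mod_lt _ (by norm_num)) hr
    refine ⟨s, fun j => ?_⟩
    have hk60 : k = k % 60 + 60 * (k / 60) := by
      rw [Nat.mod_add_div]
    have hj12 : j = j % 12 + 12 * (j / 12) := by
      rw [Nat.mod_add_div]
    show Nat.fib (k + 5 * j) % 10 = lucas (j + s) % 10
    calc Nat.fib (k + 5 * j) % 10
        = Nat.fib ((k % 60 + 5 * (j % 12)) + 60 * (k / 60 + j / 12)) % 10 := by
          congr 2; omega
      _ = Nat.fib (k % 60 + 5 * (j % 12)) % 10 := fib60m _ _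
      _ = lucas (j % 12 + s) % 10 := H _ (Nat.mod_lt _ (by norm_num))
      _ = lucas ((j % 12 + s) + 12 * (j / 12)) % 10 := (luc12m _ _).symm
      _ = lucas (j + s) % 10 := by congr 2; omega
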